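/- Let p ≥ q ≥ 1 and n = p + q. For every n×n complex matrix X written in blocks with X₁₂ the top-right p×q block and X₂₁ the bottom-left q×p block, one has (ŝ(X), ŝ(X₁₂)^{p,q}, ŝ(X₂₁)^{p,q}) ∈ LR(n,n), where ŝ(X) ∈ ℝ^{2n} is the hat of the full singular value vector s(X) ∈ ℝⁿ. -/

import Mathlib

open Matrix

/-- Eigenvalues of a (Hermitian) complex matrix, listed in decreasing order. -/
noncomputable def eigVec {k : ℕ} (X : Matrix (Fin k) (Fin k) ℂ) (hX : X.IsHermitian) :
    Fin k → ℝ :=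
  fun i => hX.eigenvalues (Tuple.sort hX.eigenvalues i.rev)

/-- The `i`-th (0-based) singular value of a rectangular complex matrix:
the square root of the `i`-th largest eigenvalue of `Y * Yᴴ` (and `0` for `i ≥ a`). -/
noncomputable def sval {a b : ℕ} (Y : Matrix (Fin a) (Fin b) ℂ) (i : ℕ) : ℝ :=
  if h : i < a then
    Real.sqrt (eigVec (Y * Yᴴ) (Matrix.isHermitian_mul_conjTranspose_self Y) ⟨i, h⟩)
  else 0

/-- The Horn cone `Horn(k)`. -/
def Horn (k : ℕ) : Set ((Fin k → ℝ) × (Fin k → ℝ) × (Fin k → ℝ)) :=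
  { v | ∃ (X Y : Matrix (Fin k) (Fin k) ℂ) (hX : X.IsHermitian) (hY : Y.IsHermitian),
      v.1 = eigVec X hX ∧ v.2.1 = eigVec Y hY ∧ v.2.2 = eigVec (X + Y) (hX.add hY) }

/-- The Littlewood–Richardson cone `LR(m,n)`. -/
def LRcone (m n : ℕ) : Set ((Fin (m + n) → ℝ) × (Fin m → ℝ) × (Fin n → ℝ)) :=
  { v | ∃ (M : Matrix (Fin (m + n)) (Fin (m + n)) ℂ) (hM : M.IsHermitian),
      v.1 = eigVec M hM ∧
      v.2.1 = eigVec (M.submatrix (Fin.castAdd n) (Fin.castAdd n))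
        (hM.submatrix (Fin.castAdd n)) ∧
      v.2.2 = eigVec (M.submatrix (Fin.natAdd m) (Fin.natAdd m))
        (hM.submatrix (Fin.natAdd m)) }

/-- Top-left `p × p` block. -/
def blockTL (p q : ℕ) (X : Matrix (Fin (p + q)) (Fin (p + q)) ℂ) : Matrix (Fin p) (Fin p) ℂ :=
  X.submatrix (Fin.castAdd q) (Fin.castAdd q)

/-- Top-right `p × q` block. -/
def blockTR (p q : ℕ) (X : Matrix (Fin (p + q)) (Fin (p + q)) ℂ) : Matrix (Fin p) (Fin q) ℂ :=
  X.submatrix (Fin.castAdd q) (Fin.natAdd p)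

/-- Bottom-left `q × p` block. -/
def blockBL (p q : ℕ) (X : Matrix (Fin (p + q)) (Fin (p + q)) ℂ) : Matrix (Fin q) (Fin p) ℂ :=
  X.submatrix (Fin.natAdd p) (Fin.castAdd q)

/-- Bottom-right `q × q` block. -/
def blockBR (p q : ℕ) (X : Matrix (Fin (p + q)) (Fin (p + q)) ℂ) : Matrix (Fin q) (Fin q) ℂ :=
  X.submatrix (Fin.natAdd p) (Fin.natAdd p)

/-- `λ* = (−λ_k, …, −λ_1)`. -/
def starVec {k : ℕ} (x : Fin k → ℝ) : Fin k → ℝ := fun i => -x i.rev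

/-- `ŝ^{p,q} = (s₁, …, s_q, 0, …, 0, −s_q, …, −s₁) ∈ ℝ^{p+q}` (with `p − q` middle zeros). -/
noncomputable def hatPQ (p q : ℕ) (s : Fin q → ℝ) : Fin (p + q) → ℝ :=
  fun i =>
    if h : (i : ℕ) < q then s ⟨i, h⟩
    else if h' : (i : ℕ) < p then 0
    else -s ⟨p + q - 1 - i, by have := i.isLt; omega⟩

/-- The cone `A(p,q)`: pairs `(e(X), s(X₁₂))` for `X` Hermitian of size `p+q`. -/
def coneA (p q : ℕ) : Set ((Fin (p + q) → ℝ) × (Fin q → ℝ)) :=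
  { v | ∃ (X : Matrix (Fin (p + q)) (Fin (p + q)) ℂ) (hX : X.IsHermitian),
      v.1 = eigVec X hX ∧ ∀ i : Fin q, v.2 i = sval (blockTR p q X) (i : ℕ) }

/-- The cone `S(p,q)`: triples `(s(X), s(X₁₂), s(X₂₁))`. -/
def coneS (p q : ℕ) : Set ((Fin (p + q) → ℝ) × (Fin q → ℝ) × (Fin q → ℝ)) :=
  { v | ∃ X : Matrix (Fin (p + q)) (Fin (p + q)) ℂ,
      (∀ i : Fin (p + q), v.1 i = sval X (i : ℕ)) ∧
      (∀ i : Fin q, v.2.1 i = sval (blockTR p q X) (i : ℕ)) ∧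
      (∀ i : Fin q, v.2.2 i = sval (blockBL p q X) (i : ℕ)) }

/-- The cone `T(p,q)`: triples `(s(X), s(X₁₁), s(X₂₂))`. -/
def coneT (p q : ℕ) : Set ((Fin (p + q) → ℝ) × (Fin p → ℝ) × (Fin q → ℝ)) :=
  { v | ∃ X : Matrix (Fin (p + q)) (Fin (p + q)) ℂ,
      (∀ i : Fin (p + q), v.1 i = sval X (i : ℕ)) ∧
      (∀ i : Fin p, v.2.1 i = sval (blockTL p q X) (i : ℕ)) ∧
      (∀ i : Fin q, v.2.2 i = sval (blockBR p q X) (i : ℕ)) }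

/-- `μ(A) = (a_r − r ≥ … ≥ a₂ − 2 ≥ a₁ − 1)` as a decreasing real vector, for
`A = {a₁ < … < a_r}` a subset of `[n]` (0-based indexing internally). -/
noncomputable def muVec {n r : ℕ} (A : Finset (Fin n)) (h : A.card = r) : Fin r → ℝ :=
  fun k => (((A.orderIsoOfFin h k.rev : Fin n) : ℕ) : ℝ) - ((k.rev : ℕ) : ℝ)

/-- `A^o = {ℓ + 1 − a : a ∈ A}` inside `[ℓ]`. -/
def opp {n : ℕ} (A : Finset (Fin n)) : Finset (Fin n) := A.image Fin.rev

/-- `|s|_{K ∩ [q]}` where `K ⊆ [n]`, `s ∈ ℝ^q` and `[q]` is viewed inside `[n]`. -/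
noncomputable def sumRestr {n q : ℕ} (s : Fin q → ℝ) (K : Finset (Fin n)) : ℝ :=
  ∑ i ∈ K, (if h : (i : ℕ) < q then s ⟨i, h⟩ else 0)

/-- The augmented matrix `Ŷ^{p,q} = [[0, Y], [Yᴴ, 0]]` of size `p + q`. -/
def hatM (p q : ℕ) (Y : Matrix (Fin p) (Fin q) ℂ) : Matrix (Fin (p + q)) (Fin (p + q)) ℂ :=
  Matrix.reindex finSumFinEquiv finSumFinEquiv (Matrix.fromBlocks 0 Y Yᴴ 0)

/-!
The Hermitian dilation `[[0, Y], [Yᴴ, 0]]` of an `a × b` matrix `Y` has characteristic polynomial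
`χ` with `X ^ (a + b) * χ = X ^ (2 * b) * χ_{Y Yᴴ}(X ^ 2)` (a Schur complement computation), and
`Y Yᴴ` has rank at most `min a b`; hence the eigenvalues of the dilation are `±` the singular values
of `Y`, padded with zeros, i.e. the vector `ŝ`. Taking for `M` the dilation of `X` with its rows
and columns suitably reordered, the diagonal blocks `M_I` and `M_II` are, up to reindexing, the
dilations of `X₁₂` and `X₂₁`.
-/

open Polynomial
open scoped ComplexOrder

lemma charpoly_submatrix_equiv {R : Type*} [CommRing R] {m n : Type*} [Fintype m] [DecidableEq m]
    [Fintype n] [DecidableEq n] (A : Matrix m m R) (e : n ≃ m) :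
    (A.submatrix e e).charpoly = A.charpoly :=
  charpoly_reindex e.symm A

lemma X_pow_mul_charpoly_fromBlocks_zero₁₁_zero₂₂ {R : Type*} [CommRing R] {m n : Type*}
    [Fintype m] [Fintype n] [DecidableEq m] [DecidableEq n] (A : Matrix m n R) (B : Matrix n m R) :
    X ^ (Fintype.card m + Fintype.card n) * (fromBlocks 0 A B 0).charpoly =
      X ^ (2 * Fintype.card n) * (A * B).charpoly.comp (X ^ 2) := by
  set L : Matrix (m ⊕ n) (m ⊕ n) R[X] := fromBlocks (scalar m X) (A.map C) 0 (scalar n X)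
  have hL : L.det = X ^ (Fintype.card m + Fintype.card n) := by
    simp [L, det_fromBlocks_zero₂₁, pow_add]
  have hprod : L * charmatrix (fromBlocks 0 A B 0) =
      fromBlocks (scalar m (X ^ 2) - (A * B).map C) 0 (-(B.map C * scalar m X))
        (scalar n (X ^ 2)) := by
    rw [charmatrix_fromBlocks, charmatrix_zero, fromBlocks_multiply, Matrix.map_mul]
    simp [sq, sub_eq_add_neg, -scalar_apply, scalar_comm, Commute.all]
    rfl -- `simp` leaves a `CStarMatrix` multiplication instance on one side
  have hcomp : (A * B).charpoly.comp (X ^ 2) = (scalar m (X ^ 2) - (A * B).map C).det := by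
    rw [← coe_compRingHom_apply, charpoly, RingHom.map_det]
    congr 1
    ext i j : 1
    by_cases h : i = j <;> simp [h, Matrix.scalar_apply, Matrix.mul_apply]
  rw [← hL, charpoly, ← det_mul, hprod, det_fromBlocks_zero₁₂, hcomp]
  simp [pow_mul]
  ring

lemma roots_prod_X_sub_C_univ {R ι : Type*} [CommRing R] [IsDomain R] [Fintype ι] (v : ι → R) :
    (∏ i, (X - C (v i))).roots = Finset.univ.val.map v := by
  rw [roots_prod _ _ (Finset.prod_ne_zero_iff.mpr fun i _ => X_sub_C_ne_zero _)]
  simp [Multiset.bind_singleton]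

section eigVec

variable {k : ℕ} {M : Matrix (Fin k) (Fin k) ℂ}

lemma antitone_eigVec (hM : M.IsHermitian) : Antitone (eigVec M hM) :=
  fun _ _ hij => Tuple.monotone_sort hM.eigenvalues (Fin.rev_le_rev.mpr hij)

lemma eigVec_nonneg (hM : M.IsHermitian) (hpsd : M.PosSemidef) (i : Fin k) :
    0 ≤ eigVec M hM i :=
  hpsd.eigenvalues_nonneg _

lemma charpoly_eq_prod_eigVec (hM : M.IsHermitian) :
    M.charpoly = ∏ i, (X - C (eigVec M hM i : ℂ)) := by
  rw [hM.charpoly_eq]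
  exact (Equiv.prod_comp (Fin.revPerm.trans (Tuple.sort _)) _).symm

lemma eigVec_eq_of_charpoly (hM : M.IsHermitian) {v : Fin k → ℝ} (hv : Antitone v)
    (h : M.charpoly = ∏ i, (X - C (v i : ℂ))) : eigVec M hM = v := by
  have hroots := roots_prod_X_sub_C_univ fun i => (v i : ℂ)
  rw [← h, charpoly_eq_prod_eigVec hM, roots_prod_X_sub_C_univ] at hroots
  have hperm : (List.ofFn (eigVec M hM)).Perm (List.ofFn v) := by
    rw [← Multiset.coe_eq_coe, ← Fin.univ_val_map, ← Fin.univ_val_map]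
    exact Multiset.map_injective Complex.ofReal_injective
      (by simpa only [Multiset.map_map, Function.comp_def] using hroots)
  exact List.ofFn_injective <|
    hperm.eq_of_sortedGE (antitone_eigVec hM).sortedGE_ofFn hv.sortedGE_ofFn

lemma eigVec_eq_zero_of_rank_le (hM : M.IsHermitian) (hpsd : M.PosSemidef) {i : Fin k}
    (hi : M.rank ≤ i) : eigVec M hM i = 0 := by
  by_contra hne
  have hsupp : Finset.Iic i ⊆ Finset.univ.filter fun j => eigVec M hM j ≠ 0 := by
    intro j hj
    have := antitone_eigVec hM (Finset.mem_Iic.mp hj)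
    simp only [Finset.mem_filter, Finset.mem_univ, true_and]
    exact (lt_of_lt_of_le ((eigVec_nonneg hM hpsd i).lt_of_ne' hne) this).ne'
  have hcard : Fintype.card {j // eigVec M hM j ≠ 0} = M.rank := by
    rw [hM.rank_eq_card_non_zero_eigs]
    exact Fintype.card_congr ((Fin.revPerm.trans (Tuple.sort _)).subtypeEquiv fun _ => Iff.rfl)
  have := Finset.card_le_card hsupp
  rw [Fin.card_Iic, ← Fintype.card_subtype, hcard] at this
  omega

end eigVec

section sval

variable {a b : ℕ} (Y : Matrix (Fin a) (Fin b) ℂ)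

lemma sval_nonneg (i : ℕ) : 0 ≤ sval Y i := by
  unfold sval
  split_ifs
  exacts [Real.sqrt_nonneg _, le_rfl]

lemma sval_sq (i : Fin a) :
    sval Y i ^ 2 = eigVec (Y * Yᴴ) (isHermitian_mul_conjTranspose_self Y) i := by
  rw [sval, dif_pos i.isLt, Real.sq_sqrt (eigVec_nonneg _ (posSemidef_self_mul_conjTranspose Y) _)]

lemma antitone_sval : Antitone (sval Y) := by
  intro i j hij
  by_cases hj : j < a
  · simp only [sval, dif_pos hj, dif_pos (lt_of_le_of_lt hij hj)]
    exact Real.sqrt_le_sqrt (antitone_eigVec _ (Fin.mk_le_mk.mpr hij))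
  · simpa only [sval, dif_neg hj] using sval_nonneg Y i

lemma sval_eq_zero_of_min_le {i : ℕ} (hi : min a b ≤ i) : sval Y i = 0 := by
  by_cases hia : i < a
  · rw [sval, dif_pos hia, Real.sqrt_eq_zero']
    refine (eigVec_eq_zero_of_rank_le _ (posSemidef_self_mul_conjTranspose Y) ?_).le
    rw [rank_self_mul_conjTranspose]
    exact (rank_le_width Y).trans ((min_le_iff.mp hi).resolve_left (by omega))
  · rw [sval, dif_neg hia]

end sval

lemma antitone_hatPQ {m k : ℕ} {s : Fin k → ℝ} (hs : Antitone s) (hs0 : ∀ i, 0 ≤ s i) :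
    Antitone (hatPQ m k s) := by
  intro i j hij
  have hij : (i : ℕ) ≤ j := hij
  simp only [hatPQ]
  split_ifs
  all_goals first
    | exact le_rfl
    | exact hs (Fin.mk_le_mk.mpr (by omega))
    | exact neg_le_neg (hs (Fin.mk_le_mk.mpr (by omega)))
    | exact hs0 _
    | exact neg_nonpos.mpr (hs0 _)
    | exact (neg_nonpos.mpr (hs0 _)).trans (hs0 _)
    | omega

lemma prod_hatPQ {β : Type*} [CommMonoid β] {m k : ℕ} (hkm : k ≤ m) (s : Fin k → ℝ)
    (f : ℝ → β) :
    ∏ i, f (hatPQ m k s i) = (∏ j, f (s j)) * f 0 ^ (m - k) * ∏ j, f (-s j) := by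
  obtain ⟨d, rfl⟩ := Nat.exists_eq_add_of_le hkm
  rw [Fin.prod_univ_add, Fin.prod_univ_add, Nat.add_sub_cancel_left,
    ← Equiv.prod_comp Fin.revPerm fun j => f (-s j)]
  congr 2
  · refine Finset.prod_congr rfl fun j _ => ?_
    simp [hatPQ]
  · trans ∏ _ : Fin d, f 0
    · refine Finset.prod_congr rfl fun j _ => ?_
      simp [hatPQ]
    · simp
  · funext j
    simp only [hatPQ, Fin.natAdd, Fin.revPerm_apply,
      dif_neg (show ¬k + d + (j : ℕ) < k by omega),
      dif_neg (show ¬k + d + (j : ℕ) < k + d by omega)]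
    congr 3
    ext
    simp only [Fin.val_rev]
    omega

lemma X_pow_mul_charpoly_fromBlocks_conjTranspose {a b : ℕ} (Y : Matrix (Fin a) (Fin b) ℂ) :
    X ^ (a + b) * (fromBlocks 0 Y Yᴴ 0).charpoly =
      X ^ (2 * b) * ∏ i ∈ Finset.range a, (X ^ 2 - C ((sval Y i : ℂ) ^ 2)) := by
  have h := X_pow_mul_charpoly_fromBlocks_zero₁₁_zero₂₂ Y Yᴴ
  simp only [Fintype.card_fin] at h
  rw [h, charpoly_eq_prod_eigVec (isHermitian_mul_conjTranspose_self Y), prod_comp,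
    ← Fin.prod_univ_eq_prod_range (fun i => X ^ 2 - C ((sval Y i : ℂ) ^ 2))]
  congr 2 with i
  rw [sub_comp, X_comp, C_comp, ← sval_sq, Complex.ofReal_pow]

lemma charpoly_fromBlocks_conjTranspose {a b m k : ℕ} (Y : Matrix (Fin a) (Fin b) ℂ)
    (hk : min a b = k) (hm : max a b = m) :
    (fromBlocks 0 Y Yᴴ 0).charpoly =
      ∏ i, (X - C (hatPQ m k (fun j => sval Y j) i : ℂ)) := by
  have hka : k ≤ a := hk ▸ min_le_left a b
  have hmk : m + k = a + b := hm ▸ hk ▸ max_add_min a b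
  obtain ⟨d, rfl⟩ := Nat.exists_eq_add_of_le hka
  have htail :
      ∏ i ∈ Finset.range d, (X ^ 2 - C ((sval Y (k + i) : ℂ) ^ 2)) = (X ^ 2) ^ d := by
    refine (Finset.prod_eq_pow_card fun i _ => ?_).trans (by rw [Finset.card_range])
    simp [sval_eq_zero_of_min_le Y (show min (k + d) b ≤ k + i by omega)]
  have hpair (x : ℝ) : (X - C (x : ℂ)) * (X - C ((-x : ℝ) : ℂ)) = X ^ 2 - C ((x : ℂ) ^ 2) := by
    simp only [Complex.ofReal_neg, map_neg, map_pow]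
    ring
  apply mul_left_cancel₀ (pow_ne_zero (k + d + b) (X_ne_zero (R := ℂ)))
  rw [X_pow_mul_charpoly_fromBlocks_conjTranspose, Finset.prod_range_add, htail,
    prod_hatPQ (f := fun x : ℝ => X - C (x : ℂ)) (by omega), mul_right_comm,
    ← Finset.prod_mul_distrib, Finset.prod_congr rfl fun j _ => hpair _,
    Fin.prod_univ_eq_prod_range (fun j => X ^ 2 - C ((sval Y j : ℂ) ^ 2))]
  simp only [Complex.ofReal_zero, map_zero, sub_zero]
  rw [← pow_mul, mul_left_comm, mul_left_comm (X ^ (k + d + b)), ← pow_add, ← pow_add]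
  congr 2
  omega

lemma eigVec_eq_hatPQ_of_charpoly_eq {a b m k : ℕ} {N : Matrix (Fin (m + k)) (Fin (m + k)) ℂ}
    (hN : N.IsHermitian) (Y : Matrix (Fin a) (Fin b) ℂ) (hk : min a b = k) (hm : max a b = m)
    (h : N.charpoly = (fromBlocks 0 Y Yᴴ 0).charpoly) :
    eigVec N hN = hatPQ m k (fun j => sval Y j) :=
  eigVec_eq_of_charpoly hN
    (antitone_hatPQ ((antitone_sval Y).comp_monotone Fin.val_strictMono.monotone)
      fun j => sval_nonneg Y j)
    (h.trans (charpoly_fromBlocks_conjTranspose Y hk hm))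

/-- Reorders the index set `rows ⊕ columns` of the dilation of `X` as
`(rows of X₁₂, columns of X₁₂, columns of X₂₁, rows of X₂₁)`. -/
def blockShuffle (p q : ℕ) : Fin (p + q + (p + q)) ≃ Fin (p + q) ⊕ Fin (p + q) :=
  finSumFinEquiv.symm.trans <|
    (Equiv.sumCongr finSumFinEquiv.symm (finSumFinEquiv.symm.trans (Equiv.sumComm _ _))).trans <|
      (Equiv.sumSumSumComm _ _ _ _).trans <|
        Equiv.sumCongr finSumFinEquiv ((Equiv.sumComm _ _).trans finSumFinEquiv)

section blockShuffle

variable {p q : ℕ} (X : Matrix (Fin (p + q)) (Fin (p + q)) ℂ)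

lemma submatrix_blockShuffle_castAdd :
    ((fromBlocks 0 X Xᴴ 0).submatrix (blockShuffle p q) (blockShuffle p q)).submatrix
        (Fin.castAdd (p + q)) (Fin.castAdd (p + q)) =
      (fromBlocks 0 (blockTR p q X) (blockTR p q X)ᴴ 0).submatrix
        finSumFinEquiv.symm finSumFinEquiv.symm := by
  ext i j
  induction i using Fin.addCases <;> induction j using Fin.addCases <;>
    simp [blockShuffle, blockTR]

lemma submatrix_blockShuffle_natAdd :
    ((fromBlocks 0 X Xᴴ 0).submatrix (blockShuffle p q) (blockShuffle p q)).submatrix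
        (Fin.natAdd (p + q)) (Fin.natAdd (p + q)) =
      (fromBlocks 0 (blockBL p q X) (blockBL p q X)ᴴ 0).submatrix
        (finSumFinEquiv.symm.trans (Equiv.sumComm _ _))
        (finSumFinEquiv.symm.trans (Equiv.sumComm _ _)) := by
  ext i j
  induction i using Fin.addCases <;> induction j using Fin.addCases <;>
    simp [blockShuffle, blockBL, -Fin.natAdd_eq_addNat]

end blockShuffle

theorem stmt_6_general (p q : ℕ) (hpq : q ≤ p)
    (X : Matrix (Fin (p + q)) (Fin (p + q)) ℂ) :
    (hatPQ (p + q) (p + q) (fun i => sval X (i : ℕ)),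
      hatPQ p q (fun i => sval (blockTR p q X) (i : ℕ)),
      hatPQ p q (fun i => sval (blockBL p q X) (i : ℕ))) ∈ LRcone (p + q) (p + q) := by
  have hH : (fromBlocks 0 X Xᴴ 0).IsHermitian := isHermitian_zero.fromBlocks rfl isHermitian_zero
  refine ⟨_, hH.submatrix (blockShuffle p q), ?_, ?_, ?_⟩ <;> symm
  · exact eigVec_eq_hatPQ_of_charpoly_eq _ X (min_self _) (max_self _)
      (charpoly_submatrix_equiv _ _)
  · refine eigVec_eq_hatPQ_of_charpoly_eq _ (blockTR p q X) (min_eq_right hpq) (max_eq_left hpq) ?_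
    rw [submatrix_blockShuffle_castAdd, charpoly_submatrix_equiv]
  · refine eigVec_eq_hatPQ_of_charpoly_eq _ (blockBL p q X) (min_eq_left hpq) (max_eq_right hpq) ?_
    rw [submatrix_blockShuffle_natAdd, charpoly_submatrix_equiv]

theorem stmt_6 (p q : ℕ) (hq : 1 ≤ q) (hpq : q ≤ p)
    (X : Matrix (Fin (p + q)) (Fin (p + q)) ℂ) :
    (hatPQ (p + q) (p + q) (fun i => sval X (i : ℕ)),
      hatPQ p q (fun i => sval (blockTR p q X) (i : ℕ)),
      hatPQ p q (fun i => sval (blockBL p q X) (i : ℕ))) ∈ LRcone (p + q) (p + q) :=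
  stmt_6_general p q hpq X
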